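/- arXiv:1606.05701 — 4 statements merged into one kernel-verified Lean document; each statement's English description precedes it below -/
import Mathlib

section
/- Let I_n = [n!, (n+1)!) for n ∈ ℕ. If A, R ⊆ ℕ, B = ⋃_{n ∈ A} I_n, and there exist N and p > 1/2 with 1/2 + 1/N < p such that for all m ≥ N, |(B ↔ R) ∩ [0,m)| / m ≥ p, then for every n ≥ N: n ∈ A if and only if more than half of the elements of I_n lie in R. -/
open Filter Set

/-- Lower (asymptotic) density of a set of naturals. -/
noncomputable def lowerDensity (Z : Set ℕ) : ℝ :=
  Filter.liminf (fun n => ((Z ∩ Set.Iio n).ncard : ℝ) / n) Filter.atTop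

/-- Upper (asymptotic) density of a set of naturals. -/
noncomputable def upperDensity (Z : Set ℕ) : ℝ :=
  Filter.limsup (fun n => ((Z ∩ Set.Iio n).ncard : ℝ) / n) Filter.atTop

/-- The agreement set `A ↔ R`. -/
def agree (A R : Set ℕ) : Set ℕ := {x | x ∈ A ↔ x ∈ R}

/-- The coarse computability bound `γ(A)`. -/
noncomputable def ccGamma (A : Set ℕ) : ℝ :=
  sSup {r | ∃ R : Set ℕ, ComputablePred (· ∈ R) ∧ r = lowerDensity (agree A R)}

/-- The coarse computability bound of the many-one degree of `A`. -/
noncomputable def GammaM (A : Set ℕ) : ℝ :=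
  sInf {r | ∃ B : Set ℕ, (· ∈ B) ≤₀ (· ∈ A) ∧ r = ccGamma B}

/-!
At `m = (n+1)!` the agreement set has at least `p·(n+1)!` elements below `m`; at most `n!` of them
lie below `n!`, and `p > 1/2 + 1/(n+1)` leaves more than `(n+1)!/2` of them inside `I_n`.
Since `B` is constant on `I_n` (equal to `n ∈ A`), agreement with `B` on a majority of `I_n`
means that `R` covers a majority of `I_n` exactly when `n ∈ A`.
-/

open scoped Nat

theorem mem_biUnion_Ico_iff_of_monotone {f : ℕ → ℕ} (hf : Monotone f) (A : Set ℕ) {n x : ℕ}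
    (hx : x ∈ Ico (f n) (f (n + 1))) : x ∈ ⋃ k ∈ A, Ico (f k) (f (k + 1)) ↔ n ∈ A := by
  simp only [mem_iUnion, exists_prop]
  refine ⟨fun ⟨k, hk, hxk⟩ => ?_, fun hn => ⟨n, hn, hx⟩⟩
  rcases lt_trichotomy k n with hkn | rfl | hnk
  · exact absurd (hx.1.trans_lt hxk.2) (hf (show k + 1 ≤ n from hkn)).not_gt
  · exact hk
  · exact absurd (hxk.1.trans_lt hx.2) (hf (show n + 1 ≤ k from hnk)).not_gt

theorem iff_majority_of_majority_agree {B R s : Set ℕ} {P : Prop} (hs : s.Finite)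
    (hB : ∀ x ∈ s, x ∈ B ↔ P) (hmaj : s.ncard < 2 * (agree B R ∩ s).ncard) :
    P ↔ s.ncard < 2 * (R ∩ s).ncard := by
  by_cases hP : P
  · have hagree : agree B R ∩ s = R ∩ s := by
      ext x
      have := hB x
      simp only [agree, mem_inter_iff, mem_ofPred_eq]
      tauto
    simpa [hP, ← hagree] using hmaj
  · have hagree : agree B R ∩ s = s \ R := by
      ext x
      have := hB x
      simp only [agree, mem_inter_iff, mem_ofPred_eq, Set.mem_sdiff]
      tauto
    have hsplit := ncard_inter_add_ncard_sdiff_eq_ncard s R hs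
    rw [hagree] at hmaj
    rw [inter_comm R s]
    simp only [hP, false_iff, not_lt]
    omega

theorem ncard_inter_Iio_le_add_ncard_inter_Ico (S : Set ℕ) (a b : ℕ) :
    (S ∩ Iio b).ncard ≤ a + (S ∩ Ico a b).ncard := by
  have hsub : S ∩ Iio b ⊆ Iio a ∪ (S ∩ Ico a b) := by
    rintro x ⟨hxS, hxb⟩
    rcases lt_or_ge x a with hxa | hax
    · exact Or.inl hxa
    · exact Or.inr ⟨hxS, hax, hxb⟩
  calc (S ∩ Iio b).ncard ≤ (Iio a ∪ (S ∩ Ico a b)).ncard :=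
        ncard_le_ncard hsub ((finite_Iio a).union ((finite_Ico a b).inter_of_right S))
    _ ≤ (Iio a).ncard + (S ∩ Ico a b).ncard := ncard_union_le _ _
    _ = a + (S ∩ Ico a b).ncard := by rw [ncard_Iio_nat]

theorem lt_two_mul_ncard_inter_Ico_factorial {S : Set ℕ} {n : ℕ} {p : ℝ}
    (hp : 1 / 2 + 1 / ((n : ℝ) + 1) < p)
    (hS : p ≤ ((S ∩ Iio (n + 1)!).ncard : ℝ) / (n + 1)!) :
    (n + 1)! < 2 * (S ∩ Ico n ! (n + 1)!).ncard := by
  set c := (S ∩ Ico n ! (n + 1)!).ncard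
  have hF : (0 : ℝ) < n ! := by exact_mod_cast Nat.factorial_pos n
  have hm : ((n + 1)! : ℝ) = ((n : ℝ) + 1) * n ! := by push_cast [Nat.factorial_succ]; ring
  have hcount : p * (n + 1)! ≤ n ! + c := by
    have := ncard_inter_Iio_le_add_ncard_inter_Ico S n ! (n + 1)!
    have hpos : (0 : ℝ) < (n + 1)! := by exact_mod_cast Nat.factorial_pos (n + 1)
    exact ((le_div_iff₀ hpos).mp hS).trans (by exact_mod_cast this)
  have hpn : ((n : ℝ) + 1) / 2 + 1 < p * ((n : ℝ) + 1) := by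
    have hinv : 1 / ((n : ℝ) + 1) * ((n : ℝ) + 1) = 1 := one_div_mul_cancel (by positivity)
    linarith [mul_lt_mul_of_pos_right hp (by positivity : (0 : ℝ) < (n : ℝ) + 1)]
  have hlt : ((n + 1)! : ℝ) < 2 * c := by
    rw [hm] at hcount ⊢
    linarith [mul_lt_mul_of_pos_right hpn hF]
  exact_mod_cast hlt

/-- Decoding from the factorial-interval blow-up: if R approximates
B = ⋃_{n ∈ A} [n!, (n+1)!) with density ≥ p > 1/2 + 1/N from N on, then
for all n ≥ N, n ∈ A iff more than half of [n!, (n+1)!) lies in R. -/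
theorem factorial_blowup_decoding (A R : Set ℕ) (N : ℕ) (p : ℝ)
    (hN : 0 < N) (hp : 1 / 2 + 1 / (N : ℝ) < p)
    (hd : ∀ m : ℕ, N ≤ m →
      p ≤ ((agree (⋃ n ∈ A, Set.Ico (Nat.factorial n) (Nat.factorial (n + 1))) R
            ∩ Set.Iio m).ncard : ℝ) / m) :
    ∀ n : ℕ, N ≤ n →
      (n ∈ A ↔ Nat.factorial (n + 1) - Nat.factorial n <
        2 * (R ∩ Set.Ico (Nat.factorial n) (Nat.factorial (n + 1))).ncard) := by
  intro n hn
  have hpn : 1 / 2 + 1 / ((n : ℝ) + 1) < p := by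
    refine lt_of_le_of_lt ?_ hp
    gcongr
    exact_mod_cast Nat.le_succ_of_le hn
  have hNm : N ≤ (n + 1)! := hn.trans ((Nat.le_succ n).trans (Nat.self_le_factorial _))
  have hmaj := lt_two_mul_ncard_inter_Ico_factorial hpn (hd _ hNm)
  rw [← ncard_Ico_nat]
  refine iff_majority_of_majority_agree (finite_Ico _ _)
    (fun x hx => mem_biUnion_Ico_iff_of_monotone Nat.monotone_factorial A hx) ?_
  rw [ncard_Ico_nat]
  exact (Nat.sub_le _ _).trans_lt hmaj
end

section
/- If a Turing degree 𝐚 is nonzero (non-computable), then Γ_T(𝐚) ≤ 1/2. More precisely, for every non-computable set A ⊆ ℕ, there is a set B many-one reducible to A with γ(B) ≤ 1/2. -/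
open Filter Set

/-!
`B` is `A` stretched over the factorial blocks `[n !, (n + 1)!)`. For a computable `R`, the
vote "does `R` fill at least half of the `n`-th block?" is computable, so it cannot agree with
`n ∈ A` for all large `n`. On each block where the vote is wrong, `B ↔ R` holds on at most half of
the block; as the block `[n !, (n + 1)!)` dwarfs everything below it, the density of `B ↔ R` up to
`(n + 1)!` is then at most `1 / 2 + 1 / (n + 1)`.
-/

open scoped Nat Topology

theorem Computable.of_eventually_eq {α : Type*} [Primcodable α] {f g : ℕ → α}
    (hg : Computable g) (h : f =ᶠ[atTop] g) : Computable f := by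
  obtain ⟨N, hN⟩ := eventually_atTop.1 h
  -- below `N`, read `f` off a finite table; from `N` on the table lookup fails and `g` takes over
  refine (Computable.option_getD
    (Computable.list_getElem?.comp (Computable.const ((List.range N).map f)) .id) hg).of_eq
    fun n => ?_
  rcases lt_or_ge n N with hn | hn
  · simp [hn]
  · simp [hn, hN n hn]

theorem ComputablePred.of_eventually_iff {p q : ℕ → Prop} (hp : ComputablePred p)
    (h : ∀ᶠ n in atTop, q n ↔ p n) : ComputablePred q := by
  classical
  obtain ⟨_, hp⟩ := hp
  exact ⟨inferInstance, hp.of_eventually_eq (h.mono fun n hn => by simp [hn])⟩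

theorem Primrec.factorial : Primrec Nat.factorial :=
  (Primrec.nat_rec₁ 1 (Primrec.nat_mul.comp (Primrec.succ.comp .fst) .snd).to₂).of_eq fun n => by
    induction n with
    | zero => rfl
    | succ n ih => simp [Nat.factorial_succ, ih]

theorem Computable.nat_count {p : ℕ → Prop} [DecidablePred p] (hp : ComputablePred p) :
    Computable (Nat.count p) := by
  replace hp : Computable fun n => decide (p n) := by obtain ⟨_, hp⟩ := hp; convert hp
  refine (Computable.nat_rec (h := fun _ (r : ℕ × ℕ) => bif decide (p r.1) then r.2 + 1 else r.2)
    .id (.const 0) (Computable.cond (hp.comp (Computable.fst.comp .snd))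
      (Computable.succ.comp (Computable.snd.comp .snd)) (Computable.snd.comp .snd)).to₂).of_eq
    fun n => ?_
  induction n with
  | zero => rfl
  | succ n ih => by_cases hn : p n <;> simp [Nat.count_succ, hn, ← ih]

theorem Set.ncard_inter_Iio_eq_count (Z : Set ℕ) [DecidablePred (· ∈ Z)] (n : ℕ) :
    (Z ∩ Iio n).ncard = Nat.count (· ∈ Z) n := by
  rw [Nat.count_eq_card_filter_range, ← Set.ncard_coe_finset]
  congr 1
  ext
  simp [and_comm]

theorem Set.ncard_inter_Ico_eq_count_sub (Z : Set ℕ) [DecidablePred (· ∈ Z)] {a b : ℕ}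
    (hab : a ≤ b) : (Z ∩ Ico a b).ncard = Nat.count (· ∈ Z) b - Nat.count (· ∈ Z) a := by
  have hsplit : (Z ∩ Iio a).ncard + (Z ∩ Ico a b).ncard = (Z ∩ Iio b).ncard := by
    rw [← Iio_union_Ico_eq_Iio hab, inter_union_distrib_left, ncard_union_eq
      ((Iio_disjoint_Ici le_rfl).mono inter_subset_right
        (inter_subset_right.trans Ico_subset_Ici_self))]
  rw [← Z.ncard_inter_Iio_eq_count, ← Z.ncard_inter_Iio_eq_count]
  omega

theorem two_mul_ncard_agree_inter_le {B R I : Set ℕ} {b : Prop} (hI : I.Finite)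
    (hB : ∀ x ∈ I, x ∈ B ↔ b) (hb : ¬(b ↔ I.ncard ≤ 2 * (R ∩ I).ncard)) :
    2 * (agree B R ∩ I).ncard ≤ I.ncard := by
  by_cases hb' : b
  · have : agree B R ∩ I = R ∩ I := by
      ext x
      constructor
      · rintro ⟨hx, hxI⟩; exact ⟨hx.1 ((hB x hxI).2 hb'), hxI⟩
      · rintro ⟨hx, hxI⟩; exact ⟨⟨fun _ => hx, fun _ => (hB x hxI).2 hb'⟩, hxI⟩
    rw [this]
    simp only [hb', true_iff] at hb
    omega
  · have : agree B R ∩ I = I \ R := by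
      ext x
      constructor
      · rintro ⟨hx, hxI⟩; exact ⟨hxI, fun hxR => hb' ((hB x hxI).1 (hx.2 hxR))⟩
      · rintro ⟨hxI, hxR⟩; exact ⟨⟨fun hxB => absurd ((hB x hxI).1 hxB) hb', hxR.elim⟩, hxI⟩
    rw [this]
    rw [inter_comm] at hb
    simp only [hb', false_iff, not_not] at hb
    have := ncard_inter_add_ncard_sdiff_eq_ncard I R hI
    omega

theorem lowerDensity_le_of_frequently_le {Z : Set ℕ} {f : ℕ → ℕ} {v : ℕ → ℝ} {c : ℝ}
    (hf : Tendsto f atTop atTop) (hv : Tendsto v atTop (𝓝 c))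
    (h : ∃ᶠ n in atTop, ((Z ∩ Iio (f n)).ncard : ℝ) / f n ≤ v n) : lowerDensity Z ≤ c := by
  refine le_of_forall_pos_le_add fun ε hε => liminf_le_of_frequently_le ?_
    ⟨0, eventually_map.2 (.of_forall fun _ => by positivity)⟩
  refine hf.frequently ((h.and_eventually (hv.eventually (eventually_le_nhds
    (lt_add_of_pos_right c hε)))).mono fun n hn => hn.1.trans hn.2)

theorem ncard_inter_Iio_succ_factorial_div_le {Z : Set ℕ} {n : ℕ}
    (h : 2 * (Z ∩ Ico n ! (n + 1)!).ncard ≤ (Ico n ! (n + 1)!).ncard) :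
    ((Z ∩ Iio (n + 1)!).ncard : ℝ) / (n + 1)! ≤ 1 / 2 + 1 / ((n : ℝ) + 1) := by
  classical
  have hle : n ! ≤ (n + 1)! := Nat.factorial_le n.le_succ
  have hbelow := Nat.count_le (· ∈ Z) (n := n !)
  rw [Z.ncard_inter_Ico_eq_count_sub hle, ncard_Ico_nat] at h
  have hcount : 2 * ((Z ∩ Iio (n + 1)!).ncard : ℝ) ≤ n ! + (n + 1)! := by
    rw [Z.ncard_inter_Iio_eq_count]
    exact_mod_cast (by omega : 2 * Nat.count (· ∈ Z) (n + 1)! ≤ n ! + (n + 1)!)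
  have hfac : ((n + 1)! : ℝ) = (n + 1) * n ! := by push_cast [Nat.factorial_succ]; ring
  have hpos : (0 : ℝ) < n ! := by exact_mod_cast n.factorial_pos
  rw [div_le_iff₀ (by positivity), hfac]
  rw [hfac] at hcount
  field_simp
  nlinarith

theorem lowerDensity_le_half_of_frequently {Z : Set ℕ}
    (h : ∃ᶠ n in atTop, 2 * (Z ∩ Ico n ! (n + 1)!).ncard ≤ (Ico n ! (n + 1)!).ncard) :
    lowerDensity Z ≤ 1 / 2 := by
  have hv : Tendsto (fun n : ℕ => 1 / 2 + 1 / ((n : ℝ) + 1)) atTop (𝓝 (1 / 2)) := by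
    simpa using tendsto_one_div_add_atTop_nhds_zero_nat.const_add (1 / 2 : ℝ)
  exact lowerDensity_le_of_frequently_le
    (tendsto_atTop_mono (fun n => n.le_succ.trans (Nat.self_le_factorial _)) tendsto_id) hv
    (h.mono fun _ => ncard_inter_Iio_succ_factorial_div_le)

-- `blockIndex ⁻¹' A` is `⋃ n ∈ A, [n !, (n + 1)!)`, except that `0`, in no block, is sent to `0`
def blockIndex (x : ℕ) : ℕ := Nat.findGreatest (fun n => n ! ≤ x) x

theorem primrec_blockIndex : Primrec blockIndex :=
  Primrec.nat_findGreatest .id (Primrec.nat_le.comp (Primrec.factorial.comp .snd) .fst)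

theorem blockIndex_eq {n x : ℕ} (hx : x ∈ Ico n ! (n + 1)!) : blockIndex x = n :=
  Nat.findGreatest_eq_iff.2 ⟨(Nat.self_le_factorial n).trans hx.1, fun _ => hx.1,
    fun _ hk _ hkx => (hx.2.trans_le (Nat.factorial_le hk)).not_ge hkx⟩

def MajorityIn (R : Set ℕ) (n : ℕ) : Prop :=
  (Ico n ! (n + 1)!).ncard ≤ 2 * (R ∩ Ico n ! (n + 1)!).ncard

theorem computablePred_majorityIn {R : Set ℕ} (hR : ComputablePred (· ∈ R)) :
    ComputablePred (MajorityIn R) := by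
  classical
  have hfac : Primrec fun n => (n + 1)! := Primrec.factorial.comp .succ
  have hcount := Computable.nat_count hR
  refine ComputablePred.of_eq (p := fun n =>
      (n + 1)! - n ! ≤ 2 * (Nat.count (· ∈ R) (n + 1)! - Nat.count (· ∈ R) n !))
    ⟨inferInstance, Primrec.nat_le.decide.to_comp.comp
      (Primrec.nat_sub.comp hfac .factorial).to_comp
      (Primrec.nat_mul.to_comp.comp (.const 2) (Primrec.nat_sub.to_comp.comp
        (hcount.comp hfac.to_comp) (hcount.comp Primrec.factorial.to_comp)))⟩ fun n => ?_
  rw [MajorityIn, ncard_Ico_nat, R.ncard_inter_Ico_eq_count_sub (Nat.factorial_le n.le_succ)]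

theorem lowerDensity_agree_blockIndex_preimage_le_half {A R : Set ℕ}
    (hA : ¬ComputablePred (· ∈ A)) (hR : ComputablePred (· ∈ R)) :
    lowerDensity (agree (blockIndex ⁻¹' A) R) ≤ 1 / 2 := by
  have hwrong : ∃ᶠ n in atTop, ¬(n ∈ A ↔ MajorityIn R n) := fun h =>
    hA ((computablePred_majorityIn hR).of_eventually_iff (h.mono fun _ => not_not.1))
  exact lowerDensity_le_half_of_frequently (hwrong.mono fun n hn =>
    two_mul_ncard_agree_inter_le (finite_Ico _ _)
      (fun x hx => by rw [mem_preimage, blockIndex_eq hx]) hn)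

/-- Every non-computable set A has a set B many-one reducible to it with γ(B) ≤ 1/2. -/
theorem exists_manyOne_ccGamma_le_half (A : Set ℕ) (hA : ¬ ComputablePred (· ∈ A)) :
    ∃ B : Set ℕ, (· ∈ B) ≤₀ (· ∈ A) ∧ ccGamma B ≤ 1 / 2 := by
  refine ⟨blockIndex ⁻¹' A, ⟨blockIndex, primrec_blockIndex.to_comp, fun _ => Iff.rfl⟩, ?_⟩
  refine Real.sSup_le ?_ (by norm_num)
  rintro _ ⟨R, hR, rfl⟩
  exact lowerDensity_agree_blockIndex_preimage_le_half hA hR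
end

section
/- Let X follow the hypergeometric distribution H(K, N, n) (number of successes in K draws without replacement from a population of size N containing n successes), and suppose p = K/N > q. Then Pr(X ≤ qn) ≤ exp(−2(p−q)²·n). -/
/-! Chernoff's method: for `σ ≥ 0`, `Pr(X ≤ qn) ≤ e^{σ(q-1)n} E[e^{σ(n-X)}]`. Writing
`e^{σ(n-X)} = (1+s)^{n-X} = ∑ⱼ C(n-X, j) sʲ`, the factorial moments
`E[C(n-X, j)] = C(n,j) C(N-j,K) / C(N,K) ≤ C(n,j) (1-p)ʲ` of `n - X` are dominated by those of a
binomial `Bin(n, 1-p)`, so `E[e^{σ(n-X)}] ≤ (p + (1-p) e^σ)ⁿ`. Hoeffding's lemma for a Bernoulli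
variable bounds `p + (1-p) e^σ` by `e^{(1-p)σ + σ²/8}`, and `σ = 4(p-q)` gives the bound. -/

open Filter Set

/-- The probability mass function of the hypergeometric distribution H(K, N, n). -/
noncomputable def hypergeomPMF (K N n x : ℕ) : ℝ :=
  ((n.choose x : ℝ) * ((N - n).choose (K - x) : ℝ)) / (N.choose K : ℝ)

open Finset Real MeasureTheory ProbabilityTheory

namespace Nat

theorem choose_mul_choose_sub_comm (n x j : ℕ) :
    n.choose x * (n - x).choose j = n.choose j * (n - j).choose x := by
  have h₁ := choose_mul (n := n) (k := x + j) (s := x) (by omega)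
  have h₂ := choose_mul (n := n) (k := x + j) (s := j) (by omega)
  rw [Nat.add_sub_cancel_left] at h₁
  rw [Nat.add_sub_cancel] at h₂
  rw [← h₁, ← h₂, choose_symm_add]

theorem sum_choose_mul_choose_mul_choose_sub {N n j : ℕ} (K : ℕ) (hn : n ≤ N) (hj : j ≤ n) :
    ∑ x ∈ range (K + 1), n.choose x * (N - n).choose (K - x) * (n - x).choose j =
      n.choose j * (N - j).choose K := by
  have hsplit : N - j = (n - j) + (N - n) := by omega
  rw [hsplit, add_choose_eq, Finset.Nat.sum_antidiagonal_eq_sum_range_succ_mk, mul_sum]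
  refine sum_congr rfl fun x _ => ?_
  rw [mul_right_comm, choose_mul_choose_sub_comm, mul_assoc]

theorem choose_sub_succ_mul_le (N K j : ℕ) :
    (N - (j + 1)).choose K * N ≤ (N - j).choose K * (N - K) := by
  obtain hj | hj := le_or_gt N j
  · rcases K with _ | K
    · simp
    · simp [show N - (j + 1) = 0 by omega]
  obtain ⟨m, hm⟩ : ∃ m, N - j = m + 1 := ⟨N - j - 1, by omega⟩
  rw [show N - (j + 1) = m by omega, hm]
  have hstep := choose_mul_succ_eq m K
  refine _root_.le_of_mul_le_mul_right ?_ (succ_pos m)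
  have hfrac : (m + 1 - K) * N ≤ (N - K) * (m + 1) := by
    rw [Nat.sub_mul, Nat.sub_mul, mul_comm N]
    exact Nat.sub_le_sub_left (Nat.mul_le_mul_left K (by omega)) _
  calc m.choose K * N * (m + 1) = (m + 1).choose K * ((m + 1 - K) * N) := by
        rw [mul_right_comm, hstep, mul_assoc]
    _ ≤ (m + 1).choose K * ((N - K) * (m + 1)) := Nat.mul_le_mul_left _ hfrac
    _ = (m + 1).choose K * (N - K) * (m + 1) := by ring

end Nat

theorem choose_sub_le_choose_mul_pow {N K : ℕ} (hN : 0 < N) (hK : K ≤ N) (j : ℕ) :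
    ((N - j).choose K : ℝ) ≤ N.choose K * (1 - K / N) ^ j := by
  have hN' : (0 : ℝ) < N := by exact_mod_cast hN
  have hp : 0 ≤ 1 - (K : ℝ) / N := by
    rw [sub_nonneg, div_le_one hN']; exact_mod_cast hK
  induction j with
  | zero => simp
  | succ j ih =>
    have hstep : ((N - (j + 1)).choose K : ℝ) ≤ (N - j).choose K * (1 - K / N) := by
      rw [one_sub_div hN'.ne', mul_div_assoc', le_div_iff₀ hN', ← Nat.cast_sub hK]
      exact_mod_cast Nat.choose_sub_succ_mul_le N K j
    calc ((N - (j + 1)).choose K : ℝ) ≤ (N - j).choose K * (1 - K / N) := hstep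
      _ ≤ N.choose K * (1 - K / N) ^ j * (1 - K / N) := by gcongr
      _ = N.choose K * (1 - K / N) ^ (j + 1) := by ring

theorem one_add_pow_eq_sum_range {R : Type*} [CommSemiring R] (s : R) {m n : ℕ} (h : m ≤ n) :
    (1 + s) ^ m = ∑ j ∈ range (n + 1), (m.choose j : R) * s ^ j := by
  rw [add_comm, add_pow]
  refine (sum_congr rfl fun j _ => by rw [one_pow, mul_one, mul_comm]).trans
    (sum_subset (range_subset_range.mpr (by omega)) fun j _ hj => ?_)
  rw [Nat.choose_eq_zero_of_lt (by simpa using hj), Nat.cast_zero, zero_mul]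

theorem one_sub_add_mul_exp_le_exp {p : ℝ} (hp : p ∈ unitInterval) (t : ℝ) :
    1 - p + p * exp t ≤ exp (p * t + t ^ 2 / 8) := by
  set μ : Measure ℝ := Ber((1 : ℝ), 0, ⟨p, hp⟩)
  have hsupp : ∀ᵐ z ∂μ, id z ∈ Set.Icc (0 : ℝ) 1 := by
    simp only [μ, bernoulliMeasure_def, ae_add_measure_iff]
    constructor <;> apply Measure.ae_smul_measure <;> simp
  have hmean : μ[id] = p := by simp [μ, integral_bernoulliMeasure]
  have hoeffding := (hasSubgaussianMGF_of_mem_Icc aemeasurable_id hsupp).mgf_le t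
  simp only [hmean, mgf, μ, integral_bernoulliMeasure] at hoeffding
  norm_num at hoeffding
  calc 1 - p + p * exp t = exp (p * t) * (p * exp (t * (1 - p)) + (1 - p) * exp (-(t * p))) := by
        simp only [mul_add, mul_left_comm (exp (p * t)), ← exp_add]
        ring_nf; rw [exp_zero]; ring
    _ ≤ exp (p * t) * exp (1 / 4 * t ^ 2 / 2) := by gcongr
    _ = exp (p * t + t ^ 2 / 8) := by rw [← exp_add]; ring_nf

theorem hypergeomPMF_nonneg (K N n x : ℕ) : 0 ≤ hypergeomPMF K N n x := by
  unfold hypergeomPMF; positivity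

theorem sum_hypergeomPMF_mul_choose_sub_le {K N n j : ℕ} (hN : 0 < N) (hnN : n ≤ N) (hKN : K ≤ N)
    (hj : j ≤ n) :
    ∑ x ∈ range (K + 1), hypergeomPMF K N n x * (n - x).choose j ≤
      n.choose j * (1 - K / N) ^ j := by
  have hC : (0 : ℝ) < N.choose K := by exact_mod_cast Nat.choose_pos hKN
  have hmoment : ∑ x ∈ range (K + 1), hypergeomPMF K N n x * (n - x).choose j =
      n.choose j * (N - j).choose K / N.choose K := by
    simp only [hypergeomPMF, div_mul_eq_mul_div, ← sum_div]
    exact_mod_cast congrArg (fun m : ℕ => (m : ℝ) / N.choose K)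
      (Nat.sum_choose_mul_choose_mul_choose_sub K hnN hj)
  rw [hmoment, div_le_iff₀ hC, mul_assoc]
  gcongr
  rw [mul_comm]
  exact choose_sub_le_choose_mul_pow hN hKN j

theorem sum_hypergeomPMF_mul_one_add_pow_le {K N n : ℕ} (hN : 0 < N) (hnN : n ≤ N) (hKN : K ≤ N)
    {s : ℝ} (hs : 0 ≤ s) :
    ∑ x ∈ range (K + 1), hypergeomPMF K N n x * (1 + s) ^ (n - x) ≤
      (1 + (1 - K / N) * s) ^ n := by
  calc ∑ x ∈ range (K + 1), hypergeomPMF K N n x * (1 + s) ^ (n - x)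
      = ∑ j ∈ range (n + 1),
          (∑ x ∈ range (K + 1), hypergeomPMF K N n x * (n - x).choose j) * s ^ j := by
        simp only [one_add_pow_eq_sum_range s (Nat.sub_le n _), mul_sum, sum_mul, mul_assoc]
        exact sum_comm
    _ ≤ ∑ j ∈ range (n + 1), n.choose j * (1 - K / N) ^ j * s ^ j := by
        gcongr with j hj
        exact sum_hypergeomPMF_mul_choose_sub_le hN hnN hKN (Nat.lt_succ_iff.mp (mem_range.mp hj))
    _ = (1 + (1 - K / N) * s) ^ n := by
        rw [one_add_pow_eq_sum_range _ le_rfl]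
        simp only [mul_pow, mul_assoc]

theorem hypergeom_tail_le_exp_mul_sum {K N n : ℕ} (hN : 0 < N) (hnN : n ≤ N) (hKN : K ≤ N)
    {q σ : ℝ} (hσ : 0 ≤ σ) (hq : q ≤ K / N) :
    ∑ x ∈ range (N + 1), (if (x : ℝ) ≤ q * n then hypergeomPMF K N n x else 0) ≤
      exp (σ * (q * n - n)) * ∑ x ∈ range (K + 1), hypergeomPMF K N n x * exp σ ^ (n - x) := by
  have hN' : (0 : ℝ) < N := by exact_mod_cast hN
  have hp1 : (K : ℝ) / N ≤ 1 := div_le_one_of_le₀ (by exact_mod_cast hKN) hN'.le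
  have hqn_le_K : q * n ≤ K := calc
    q * n ≤ K / N * n := by gcongr
    _ ≤ K / N * N := by gcongr
    _ = K := div_mul_cancel₀ _ hN'.ne'
  have hqn_le_n : q * n ≤ n :=
    (mul_le_mul_of_nonneg_right (hq.trans hp1) n.cast_nonneg).trans_eq (one_mul _)
  -- `hypergeomPMF` need not vanish for `x > K` (truncated `K - x`); such `x` exceed `q * n`.
  rw [← sum_subset (range_subset_range.mpr (by omega : K + 1 ≤ N + 1)) fun x _ hx => ?_, mul_sum]
  · refine sum_le_sum fun x _ => ?_
    split_ifs with hx
    · have hxn : x ≤ n := by exact_mod_cast hx.trans hqn_le_n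
      have hweight : 1 ≤ exp (σ * (q * n - n)) * exp σ ^ (n - x) := by
        rw [← exp_nat_mul, ← exp_add, Nat.cast_sub hxn]
        exact one_le_exp (by nlinarith)
      nlinarith [hypergeomPMF_nonneg K N n x]
    · have := hypergeomPMF_nonneg K N n x
      positivity
  · have hKx : (K : ℝ) < x := by exact_mod_cast (by simpa using hx : K < x)
    exact if_neg (by linarith)

theorem sum_hypergeomPMF_mul_exp_pow_le {K N n : ℕ} (hN : 0 < N) (hnN : n ≤ N) (hKN : K ≤ N)
    {σ : ℝ} (hσ : 0 ≤ σ) :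
    ∑ x ∈ range (K + 1), hypergeomPMF K N n x * exp σ ^ (n - x) ≤
      exp (n * ((1 - K / N) * σ + σ ^ 2 / 8)) := by
  have hp : 1 - (K : ℝ) / N ∈ unitInterval := Set.Icc.mem_iff_one_sub_mem.mp
    ⟨by positivity, div_le_one_of_le₀ (by exact_mod_cast hKN) (by positivity)⟩
  calc ∑ x ∈ range (K + 1), hypergeomPMF K N n x * exp σ ^ (n - x)
      = ∑ x ∈ range (K + 1), hypergeomPMF K N n x * (1 + (exp σ - 1)) ^ (n - x) := by
        simp only [add_sub_cancel]
    _ ≤ (1 - (1 - K / N) + (1 - K / N) * exp σ) ^ n := by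
        convert sum_hypergeomPMF_mul_one_add_pow_le hN hnN hKN (sub_nonneg.mpr (one_le_exp hσ))
          using 2
        ring
    _ ≤ exp ((1 - K / N) * σ + σ ^ 2 / 8) ^ n := by
        gcongr
        · nlinarith [hp.1, hp.2, exp_pos σ]
        · exact one_sub_add_mul_exp_le_exp hp σ
    _ = exp (n * ((1 - K / N) * σ + σ ^ 2 / 8)) := (exp_nat_mul _ n).symm

/-- Hoeffding's tail bound for the hypergeometric distribution: if X ~ H(K,N,n) and
p = K/N > q, then Pr(X ≤ qn) ≤ exp(−2(p−q)²n). -/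
theorem hypergeometric_tail_bound (K N n : ℕ) (q : ℝ) (hN : 0 < N) (hnN : n ≤ N) (hKN : K ≤ N)
    (hq : q < (K : ℝ) / N) :
    ∑ x ∈ Finset.range (N + 1), (if (x : ℝ) ≤ q * n then hypergeomPMF K N n x else 0) ≤
      Real.exp (-2 * ((K : ℝ) / N - q) ^ 2 * n) := by
  set σ := 4 * ((K : ℝ) / N - q)
  have hσ : 0 ≤ σ := by linarith
  calc _ ≤ exp (σ * (q * n - n)) * ∑ x ∈ range (K + 1), hypergeomPMF K N n x * exp σ ^ (n - x) :=
        hypergeom_tail_le_exp_mul_sum hN hnN hKN hσ hq.le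
    _ ≤ exp (σ * (q * n - n)) * exp (n * ((1 - K / N) * σ + σ ^ 2 / 8)) := by
        gcongr
        exact sum_hypergeomPMF_mul_exp_pow_le hN hnN hKN hσ
    _ = exp (-2 * ((K : ℝ) / N - q) ^ 2 * n) := by
        rw [← exp_add]
        simp only [σ]
        ring_nf
end

section
/- Let f : ℕ → ℕ and let I be a finite set. Partition I as I = I* ∪ I**¹ ∪ I**² (disjoint), where f restricted to I* is injective with image disjoint from f(I**¹ ∪ I**²), f restricted to each of I**¹, I**² is injective, and f(I**¹) = f(I**²). Let A ⊆ ℕ, B := f⁻¹(A), and B* := I**¹ (viewed inside I). Then |(B ↔ B*) ∩ (I**¹ ∪ I**²)| = |I**¹|. -/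
open Filter Set

/-!
Pair each `x ∈ I1` with the unique `y ∈ I2` such that `f x = f y`. Exactly one of `x`, `y`
lies in the agreement set of `f⁻¹' A` and `I1`: `x` if `f x ∈ A`, and `y` otherwise. Hence the
agreement set meets `I1 ∪ I2` in `{x ∈ I1 | f x ∈ A} ∪ {y ∈ I2 | f y ∉ A}`, and via `f` these two
parts biject onto the parts of `f '' I1` inside and outside `A`.
-/

theorem agree_inter_union_eq_filter_union_filter {I1 I2 : Finset ℕ} (h12 : Disjoint I1 I2)
    (B : Set ℕ) [DecidablePred (· ∈ B)] :
    agree B ↑I1 ∩ ↑(I1 ∪ I2) = ↑(I1.filter (· ∈ B) ∪ I2.filter (· ∉ B)) := by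
  ext x
  have hx : x ∈ I2 → x ∉ I1 := fun hx2 hx1 => Finset.disjoint_left.mp h12 hx1 hx2
  simp only [agree, Set.mem_inter_iff, Set.mem_ofPred_eq, Finset.coe_union, Finset.coe_filter,
    Set.mem_union, Finset.mem_coe]
  tauto

theorem Finset.card_filter_comp_of_injOn {α β : Type*} [DecidableEq β] {f : α → β}
    {s : Finset α} (hf : Set.InjOn f s) (p : β → Prop) [DecidablePred p] :
    (s.filter (fun x => p (f x))).card = ((s.image f).filter p).card := by
  rw [Finset.filter_image, Finset.card_image_of_injOn (hf.mono (Finset.filter_subset _ s))]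

theorem doubled_part_agreement_general (f : ℕ → ℕ) (I1 I2 : Finset ℕ)
    (h12 : Disjoint I1 I2)
    (hinj1 : Set.InjOn f ↑I1) (hinj2 : Set.InjOn f ↑I2)
    (him : I1.image f = I2.image f)
    (A : Set ℕ) :
    (agree (f ⁻¹' A) ↑I1 ∩ ↑(I1 ∪ I2)).ncard = I1.card := by
  classical
  rw [agree_inter_union_eq_filter_union_filter h12, Set.ncard_coe_finset,
    Finset.card_union_of_disjoint (Finset.disjoint_filter_filter h12)]
  calc (I1.filter (fun x => f x ∈ A)).card + (I2.filter (fun x => f x ∉ A)).card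
      = ((I1.image f).filter (· ∈ A)).card + ((I1.image f).filter (· ∉ A)).card := by
        rw [Finset.card_filter_comp_of_injOn hinj1 (· ∈ A), Finset.card_filter_comp_of_injOn hinj2 (· ∉ A), him]
    _ = I1.card := by
        rw [Finset.card_filter_add_card_filter_not, Finset.card_image_of_injOn hinj1]

/-- The pairing argument: on the doubled part I**¹ ∪ I**², the approximation B* = I**¹
agrees with B = f⁻¹(A) on exactly |I**¹| elements. -/
theorem doubled_part_agreement (f : ℕ → ℕ) (Istar I1 I2 : Finset ℕ)
    (h12 : Disjoint I1 I2) (hs1 : Disjoint Istar I1) (hs2 : Disjoint Istar I2)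
    (hinjs : Set.InjOn f ↑Istar) (hinj1 : Set.InjOn f ↑I1) (hinj2 : Set.InjOn f ↑I2)
    (him : I1.image f = I2.image f)
    (himdisj : Disjoint (Istar.image f) ((I1 ∪ I2).image f))
    (A : Set ℕ) :
    (agree (f ⁻¹' A) ↑I1 ∩ ↑(I1 ∪ I2)).ncard = I1.card :=
  doubled_part_agreement_general f I1 I2 h12 hinj1 hinj2 him A
end
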